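/- arXiv:quant-ph/9912054 — 4 statements merged into one kernel-verified Lean document; each statement's English description precedes it below -/
import Mathlib

section
/- For every point z in an open set U ⊆ ℂ and every holomorphic function F on U that is square-integrable with respect to a continuous strictly positive weight α, there exists a constant c_z (depending only on z, U, α) such that |F(z)|² ≤ c_z · ∫_U |F(w)|² α(w) dw. -/
/-!
Since `F ^ 2` is holomorphic, the mean value property gives `‖F z‖ ^ 2 ≤` the average of `‖F‖ ^ 2`
over every circle around `z`; integrating in polar coordinates over a disc `closedBall z r ⊆ U`
gives `π r² ‖F z‖ ^ 2 ≤ ∫_{ball z r} ‖F‖ ^ 2`. On that compact disc `α` is bounded below by some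
`m > 0`, so `c_z = (π r² m)⁻¹` works.
-/

open MeasureTheory Metric Set Real

section

variable {E : Type*} [NormedAddCommGroup E] [NormedSpace ℝ E]

theorem Real.norm_circleAverage_le_circleAverage_norm (f : ℂ → E) (c : ℂ) (R : ℝ) :
    ‖circleAverage f c R‖ ≤ circleAverage (‖f ·‖) c R := by
  rw [circleAverage, circleAverage, norm_smul, smul_eq_mul, norm_inv,
    Real.norm_of_nonneg two_pi_pos.le]
  gcongr
  exact intervalIntegral.norm_integral_le_integral_norm two_pi_pos.le

theorem setIntegral_Ioo_neg_pi_pi_circleMap (f : ℂ → E) (c : ℂ) (R : ℝ) :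
    ∫ θ in Ioo (-π) π, f (circleMap c R θ) = (2 * π) • circleAverage f c R := by
  rw [circleAverage_eq_integral_add (-π), smul_inv_smul₀ two_pi_pos.ne',
    intervalIntegral.integral_comp_add_right (fun θ => f (circleMap c R θ)),
    intervalIntegral.integral_of_le (by linarith [pi_pos]), integral_Ioc_eq_integral_Ioo]
  ring_nf

theorem Complex.add_polarCoord_symm_eq_circleMap (c : ℂ) (p : ℝ × ℝ) :
    c + Complex.polarCoord.symm p = circleMap c p.1 p.2 := by
  simp [circleMap, Complex.exp_mul_I, Complex.ofReal_cos, Complex.ofReal_sin]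

theorem integral_ball_eq_integral_circleAverage
    {g : ℂ → E} {c : ℂ} {r : ℝ} (hg : ContinuousOn g (closedBall c r)) :
    ∫ w in ball c r, g w = ∫ s in Ioo 0 r, (2 * π * s) • circleAverage g c s := by
  set S : Set (ℝ × ℝ) := Ioo 0 r ×ˢ Ioo (-π) π
  set h : ℝ × ℝ → E := fun p => p.1 • g (circleMap c p.1 p.2)
  have hS : S ⊆ Complex.polarCoord.target := by
    rw [Complex.polarCoord_target]
    exact prod_mono Ioo_subset_Ioi_self subset_rfl
  have hS_meas : MeasurableSet S := measurableSet_Ioo.prod measurableSet_Ioo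
  have h_indicator : ∀ p ∈ Complex.polarCoord.target,
      p.1 • (ball c r).indicator g (c + Complex.polarCoord.symm p) = S.indicator h p := by
    rintro ⟨s, θ⟩ ⟨hs, hθ⟩
    have hs : 0 < s := hs
    have h_mem : circleMap c s θ ∈ ball c r ↔ (s, θ) ∈ S := by
      simp [S, mem_ball, dist_eq_norm, circleMap_sub_center, abs_of_pos hs, hs, hθ]
    rw [Complex.add_polarCoord_symm_eq_circleMap]
    by_cases hsr : (s, θ) ∈ S
    · simp [indicator_of_mem hsr, indicator_of_mem (h_mem.2 hsr), h]
    · simp [indicator_of_notMem hsr, indicator_of_notMem (mt h_mem.1 hsr)]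
  have h_int : IntegrableOn h S := by
    refine ContinuousOn.integrableOn_compact (isCompact_Icc.prod isCompact_Icc) ?_ |>.mono_set
      (prod_mono Ioo_subset_Icc_self Ioo_subset_Icc_self)
    refine continuousOn_fst.smul (hg.comp circleMap.continuous.continuousOn ?_)
    rintro ⟨s, θ⟩ ⟨⟨hs, hsr⟩, -⟩
    exact closedBall_subset_closedBall hsr (circleMap_mem_closedBall c hs θ)
  calc ∫ w in ball c r, g w
      = ∫ w, (ball c r).indicator g (c + w) := by
        rw [integral_add_left_eq_self, integral_indicator measurableSet_ball]
    _ = ∫ p in Complex.polarCoord.target, S.indicator h p := by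
        rw [← Complex.integral_comp_polarCoord_symm]
        exact setIntegral_congr_fun Complex.polarCoord.open_target.measurableSet h_indicator
    _ = ∫ s in Ioo 0 r, ∫ θ in Ioo (-π) π, s • g (circleMap c s θ) := by
        rw [integral_indicator hS_meas, Measure.restrict_restrict hS_meas, inter_eq_left.2 hS,
          Measure.volume_eq_prod, setIntegral_prod _ (by rwa [← Measure.volume_eq_prod])]
    _ = ∫ s in Ioo 0 r, (2 * π * s) • circleAverage g c s := by
        simp_rw [integral_smul, setIntegral_Ioo_neg_pi_pi_circleMap, smul_smul, mul_comm]

end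

theorem DiffContOnCl.norm_le_circleAverage_norm {E : Type*} [NormedAddCommGroup E]
    [NormedSpace ℂ E] [CompleteSpace E] {f : ℂ → E} {c : ℂ} {R : ℝ}
    (hf : DiffContOnCl ℂ f (ball c |R|)) :
    ‖f c‖ ≤ Real.circleAverage (‖f ·‖) c R :=
  hf.circleAverage ▸ norm_circleAverage_le_circleAverage_norm f c R

theorem DifferentiableOn.norm_pow_le_circleAverage {f : ℂ → ℂ} {c : ℂ} {R : ℝ}
    (hf : DifferentiableOn ℂ f (closedBall c |R|)) (n : ℕ) :
    ‖f c‖ ^ n ≤ circleAverage (‖f ·‖ ^ n) c R := by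
  simpa only [Pi.pow_apply, norm_pow] using
    ((hf.pow n).diffContOnCl_ball subset_rfl).norm_le_circleAverage_norm

theorem mul_le_setIntegral_ball_of_le_circleAverage {g : ℂ → ℝ} {c : ℂ} {r : ℝ} (hr : 0 ≤ r)
    (hg : ContinuousOn g (closedBall c r)) (h : ∀ s ∈ Ioo 0 r, g c ≤ circleAverage g c s) :
    π * r ^ 2 * g c ≤ ∫ w in ball c r, g w := by
  have h_avg : ContinuousOn (circleAverage g c) (Icc 0 r) := by
    refine ContinuousOn.circleAverage (hg.mono fun w hw => ?_) fun s hs => hs.1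
    simpa [dist_eq_norm] using hw.2
  rw [integral_ball_eq_integral_circleAverage hg]
  calc π * r ^ 2 * g c = ∫ s in Ioo 0 r, 2 * π * s * g c := by
        rw [← integral_Ioc_eq_integral_Ioo, ← intervalIntegral.integral_of_le hr,
          intervalIntegral.integral_mul_const, intervalIntegral.integral_const_mul, integral_id]
        ring
    _ ≤ ∫ s in Ioo 0 r, (2 * π * s) • circleAverage g c s := by
        refine setIntegral_mono_on ?_ ?_ measurableSet_Ioo fun s hs => ?_
        · exact (by fun_prop : Continuous _).integrableOn_Icc.mono_set Ioo_subset_Icc_self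
        · exact ((continuousOn_const.mul continuousOn_id).smul h_avg).integrableOn_Icc.mono_set
            Ioo_subset_Icc_self
        · exact mul_le_mul_of_nonneg_left (h s hs) (by have := hs.1; positivity)

theorem DifferentiableOn.mul_norm_pow_le_setIntegral_ball {f : ℂ → ℂ} {c : ℂ} {r : ℝ}
    (hr : 0 ≤ r) (hf : DifferentiableOn ℂ f (closedBall c r)) (n : ℕ) :
    π * r ^ 2 * ‖f c‖ ^ n ≤ ∫ w in ball c r, ‖f w‖ ^ n :=
  mul_le_setIntegral_ball_of_le_circleAverage hr (hf.continuousOn.norm.pow n) fun _ hs =>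
    (hf.mono (closedBall_subset_closedBall ((abs_of_pos hs.1).trans_le hs.2.le)))
      |>.norm_pow_le_circleAverage n

theorem const_mul_setIntegral_le_setIntegral_mul {X : Type*} [MeasurableSpace X] {μ : Measure X}
    {f α : X → ℝ} {s : Set X} {m : ℝ} (hs : MeasurableSet s) (hf : IntegrableOn f s μ)
    (hfα : IntegrableOn (fun x => f x * α x) s μ) (hf_nonneg : ∀ x ∈ s, 0 ≤ f x)
    (hm : ∀ x ∈ s, m ≤ α x) :
    m * ∫ x in s, f x ∂μ ≤ ∫ x in s, f x * α x ∂μ := by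
  rw [← integral_const_mul]
  refine setIntegral_mono_on (hf.const_mul m) hfα hs fun x hx => ?_
  rw [mul_comm]
  exact mul_le_mul_of_nonneg_left (hm x hx) (hf_nonneg x hx)

theorem pointwise_evaluation_bound_general
    (U : Set ℂ) (hU : IsOpen U)
    (α : ℂ → ℝ) (hα : ContinuousOn α U) (hαpos : ∀ z ∈ U, 0 < α z)
    (z : ℂ) (hz : z ∈ U) :
    ∃ c : ℝ, ∀ F : ℂ → ℂ, DifferentiableOn ℂ F U →
      IntegrableOn (fun w => ‖F w‖ ^ 2 * α w) U →
      ‖F z‖ ^ 2 ≤ c * ∫ w in U, ‖F w‖ ^ 2 * α w := by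
  obtain ⟨r, hr, hrU⟩ := nhds_basis_closedBall.mem_iff.1 (hU.mem_nhds hz)
  have hballU : ball z r ⊆ U := ball_subset_closedBall.trans hrU
  obtain ⟨m, hm, hmα⟩ := (isCompact_closedBall z r).exists_forall_le' (hα.mono hrU)
    fun w hw => hαpos w (hrU hw)
  refine ⟨(π * r ^ 2 * m)⁻¹, fun F hF hFα => ?_⟩
  have hF_sq : IntegrableOn (fun w => ‖F w‖ ^ 2) (ball z r) :=
    ((hF.continuousOn.mono hrU).norm.pow 2).integrableOn_compact (isCompact_closedBall z r)
      |>.mono_set ball_subset_closedBall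
  have hFα_nonneg : 0 ≤ᵐ[volume.restrict U] fun w => ‖F w‖ ^ 2 * α w :=
    ae_restrict_of_forall_mem hU.measurableSet fun w hw => by have := hαpos w hw; positivity
  calc ‖F z‖ ^ 2 = (π * r ^ 2 * m)⁻¹ * (m * (π * r ^ 2 * ‖F z‖ ^ 2)) := by
        field_simp
    _ ≤ (π * r ^ 2 * m)⁻¹ * (m * ∫ w in ball z r, ‖F w‖ ^ 2) := by
        gcongr
        exact (hF.mono hrU).mul_norm_pow_le_setIntegral_ball hr.le 2
    _ ≤ (π * r ^ 2 * m)⁻¹ * ∫ w in ball z r, ‖F w‖ ^ 2 * α w := by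
        gcongr ?_ * ?_
        exact const_mul_setIntegral_le_setIntegral_mul measurableSet_ball hF_sq
          (hFα.mono_set hballU) (fun w _ => by positivity)
          fun w hw => hmα w (ball_subset_closedBall hw)
    _ ≤ (π * r ^ 2 * m)⁻¹ * ∫ w in U, ‖F w‖ ^ 2 * α w := by
        gcongr ?_ * ?_
        exact setIntegral_mono_set hFα hFα_nonneg hballU.eventuallyLE

theorem pointwise_evaluation_bound
    (U : Set ℂ) (hU : IsOpen U) (hne : U.Nonempty)
    (α : ℂ → ℝ) (hα : ContinuousOn α U) (hαpos : ∀ z ∈ U, 0 < α z)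
    (z : ℂ) (hz : z ∈ U) :
    ∃ c : ℝ, ∀ F : ℂ → ℂ, DifferentiableOn ℂ F U →
      IntegrableOn (fun w => ‖F w‖ ^ 2 * α w) U →
      ‖F z‖ ^ 2 ≤ c * ∫ w in U, ‖F w‖ ^ 2 * α w :=
  pointwise_evaluation_bound_general U hU α hα hαpos z hz
end

section
/- The space of holomorphic functions on an open set U ⊆ ℂ that are square-integrable against a continuous strictly positive weight α is a closed subspace of L²(U, α dA): if Fₙ are holomorphic, F ∈ L²(U, α dA), and Fₙ → F in L², then F agrees almost everywhere with a holomorphic function. -/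
open MeasureTheory Metric Real Set Filter Topology

/-! Applying the mean value property to `f ^ 2` gives `‖f z‖ ^ 2 ≤` the average of `‖f‖ ^ 2` over
every circle, hence over every disc, around `z`. As `α` is bounded below by a positive constant
near each point of `U`, point evaluations of holomorphic functions are locally uniformly bounded
by the weighted `L²` norm. So the `L²(α)`-Cauchy sequence `Fn` is locally uniformly Cauchy and
converges locally uniformly to a holomorphic `G`, and Fatou's lemma identifies `G` with the
`L²(α)` limit `F` almost everywhere on `U`. -/

section CircleAverage

variable {E : Type*} [NormedAddCommGroup E] [NormedSpace ℝ E]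

theorem Real.norm_circleAverage_le {f : ℂ → E} {c : ℂ} {R : ℝ} :
    ‖circleAverage f c R‖ ≤ circleAverage (fun z => ‖f z‖) c R := by
  rw [circleAverage, circleAverage, norm_smul, smul_eq_mul, Real.norm_of_nonneg (by positivity)]
  gcongr
  exact intervalIntegral.norm_integral_le_integral_norm two_pi_pos.le

theorem Real.two_pi_smul_circleAverage_eq_setIntegral_Ioo (g : ℂ → E) (c : ℂ) (s : ℝ) :
    (2 * π) • circleAverage g c s = ∫ θ in Ioo (-π) π, g (circleMap c s θ) := by
  rw [circleAverage_eq_integral_add (-π), smul_inv_smul₀ two_pi_pos.ne',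
    intervalIntegral.integral_comp_add_right (fun θ => g (circleMap c s θ)),
    intervalIntegral.integral_of_le (by linarith [pi_pos]), integral_Ioc_eq_integral_Ioo]
  ring_nf

theorem integral_ball_eq_intervalIntegral_circleAverage {g : ℂ → E} {c : ℂ} {r : ℝ}
    (hr : 0 ≤ r) (hg : ContinuousOn g (closedBall c r)) :
    ∫ w in ball c r, g w = ∫ s in 0..r, (2 * π * s) • circleAverage g c s := by
  set S : Set (ℝ × ℝ) := Ioo 0 r ×ˢ Ioo (-π) π
  set k : ℝ × ℝ → E := fun p => p.1 • g (circleMap c p.1 p.2)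
  have hk : IntegrableOn k S := by
    refine ContinuousOn.integrableOn_compact (isCompact_Icc.prod isCompact_Icc) ?_
      |>.mono_set (prod_mono Ioo_subset_Icc_self Ioo_subset_Icc_self)
    refine continuous_fst.continuousOn.smul (hg.comp (by fun_prop) fun p hp => ?_)
    exact closedBall_subset_closedBall hp.1.2 (circleMap_mem_closedBall c hp.1.1 p.2)
  have hpolar : ∀ p ∈ polarCoord.target,
      p.1 • (ball c r).indicator g (c + Complex.polarCoord.symm p) = S.indicator k p := by
    rintro ⟨s, θ⟩ hp
    obtain ⟨hs, hθ⟩ : 0 < s ∧ θ ∈ Ioo (-π) π := by simpa [polarCoord_target] using hp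
    have hcircle : c + Complex.polarCoord.symm (s, θ) = circleMap c s θ := by
      rw [Complex.polarCoord_symm_apply, circleMap, Complex.exp_mul_I]
      push_cast
      ring
    have hmem : circleMap c s θ ∈ ball c r ↔ (s, θ) ∈ S := by
      simp [S, hs, hθ, dist_eq_norm, circleMap_sub_center, abs_of_pos hs]
    by_cases hsr : (s, θ) ∈ S
    · rw [hcircle, indicator_of_mem (hmem.mpr hsr), indicator_of_mem hsr]
    · rw [hcircle, indicator_of_notMem (mt hmem.mp hsr), indicator_of_notMem hsr, smul_zero]
  calc ∫ w in ball c r, g w = ∫ z, (ball c r).indicator g (c + z) := by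
        rw [integral_add_left_eq_self, integral_indicator measurableSet_ball]
    _ = ∫ p in polarCoord.target, S.indicator k p := by
        rw [← Complex.integral_comp_polarCoord_symm,
          setIntegral_congr_fun polarCoord.open_target.measurableSet hpolar]
    _ = ∫ p in S, k p := by
        have hS : S ⊆ polarCoord.target :=
          polarCoord_target ▸ prod_mono Ioo_subset_Ioi_self subset_rfl
        rw [setIntegral_indicator (measurableSet_Ioo.prod measurableSet_Ioo),
          inter_eq_self_of_subset_right hS]
    _ = ∫ s in Ioo 0 r, ∫ θ in Ioo (-π) π, s • g (circleMap c s θ) := setIntegral_prod k hk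
    _ = ∫ s in 0..r, (2 * π * s) • circleAverage g c s := by
        rw [intervalIntegral.integral_of_le hr, integral_Ioc_eq_integral_Ioo]
        refine setIntegral_congr_fun measurableSet_Ioo fun s _ => ?_
        rw [MeasureTheory.integral_smul, mul_comm, mul_smul,
          two_pi_smul_circleAverage_eq_setIntegral_Ioo]

end CircleAverage

theorem DiffContOnCl.norm_sq_le_circleAverage {f : ℂ → ℂ} {c : ℂ} {R : ℝ}
    (hf : DiffContOnCl ℂ f (ball c |R|)) :
    ‖f c‖ ^ 2 ≤ Real.circleAverage (fun z => ‖f z‖ ^ 2) c R := by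
  have hsq : DiffContOnCl ℂ (fun z => f z ^ 2) (ball c |R|) :=
    (differentiable_pow (𝕜 := ℂ) 2).comp_diffContOnCl (f := fun w => w ^ 2) hf
  calc ‖f c‖ ^ 2 = ‖Real.circleAverage (fun z => f z ^ 2) c R‖ := by
        rw [hsq.circleAverage, norm_pow]
    _ ≤ Real.circleAverage (fun z => ‖f z‖ ^ 2) c R := by
      convert Real.norm_circleAverage_le (f := fun z => f z ^ 2) (c := c) (R := R) using 3
      exact (norm_pow _ _).symm

theorem DiffContOnCl.norm_sq_mul_le_integral_ball {f : ℂ → ℂ} {c : ℂ} {r : ℝ} (hr : 0 < r)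
    (hf : DiffContOnCl ℂ f (ball c r)) :
    ‖f c‖ ^ 2 * (π * r ^ 2) ≤ ∫ w in ball c r, ‖f w‖ ^ 2 := by
  have hcont : ContinuousOn (fun w => ‖f w‖ ^ 2) (closedBall c r) := by
    have := hf.continuousOn
    rw [closure_ball c hr.ne'] at this
    fun_prop
  rw [integral_ball_eq_intervalIntegral_circleAverage hr.le hcont]
  have hint : IntervalIntegrable
      (fun s => (2 * π * s) • Real.circleAverage (fun w => ‖f w‖ ^ 2) c s) volume 0 r := by
    refine ContinuousOn.intervalIntegrable_of_Icc hr.le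
      ((continuous_const.mul continuous_id).continuousOn.smul ?_)
    refine (hcont.mono fun z hz => ?_).circleAverage fun s hs => hs.1
    simpa [dist_eq_norm] using hz.2
  calc ‖f c‖ ^ 2 * (π * r ^ 2) = ∫ s in 0..r, (2 * π * s) • ‖f c‖ ^ 2 := by
        rw [intervalIntegral.integral_smul_const, intervalIntegral.integral_const_mul, integral_id]
        simp only [smul_eq_mul]
        ring
    _ ≤ ∫ s in 0..r, (2 * π * s) • Real.circleAverage (fun w => ‖f w‖ ^ 2) c s := by
        refine intervalIntegral.integral_mono_on hr.le
          (Continuous.intervalIntegrable (by fun_prop) _ _) hint fun s hs => ?_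
        have hball : DiffContOnCl ℂ f (ball c |s|) :=
          hf.mono (ball_subset_ball ((abs_of_nonneg hs.1).trans_le hs.2))
        exact smul_le_smul_of_nonneg_left hball.norm_sq_le_circleAverage
          (mul_nonneg two_pi_pos.le hs.1)

theorem DiffContOnCl.norm_sq_mul_le_setIntegral_mul {f : ℂ → ℂ} {α : ℂ → ℝ} {U : Set ℂ}
    {z : ℂ} {r m : ℝ} (hr : 0 < r) (hf : DiffContOnCl ℂ f (ball z r)) (hball : ball z r ⊆ U)
    (hm : 0 ≤ m) (hmα : ∀ w ∈ ball z r, m ≤ α w) (hα : ∀ w ∈ U, 0 ≤ α w)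
    (hU : MeasurableSet U) (hint : IntegrableOn (fun w => ‖f w‖ ^ 2 * α w) U) :
    ‖f z‖ ^ 2 * (π * r ^ 2) * m ≤ ∫ w in U, ‖f w‖ ^ 2 * α w := by
  have hsq : IntegrableOn (fun w => ‖f w‖ ^ 2) (ball z r) :=
    ((hf.continuousOn.norm.pow 2).integrableOn_compact isBounded_ball.isCompact_closure).mono_set
      subset_closure
  calc ‖f z‖ ^ 2 * (π * r ^ 2) * m ≤ (∫ w in ball z r, ‖f w‖ ^ 2) * m :=
        mul_le_mul_of_nonneg_right (hf.norm_sq_mul_le_integral_ball hr) hm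
    _ = ∫ w in ball z r, ‖f w‖ ^ 2 * m := (integral_mul_const _ _).symm
    _ ≤ ∫ w in ball z r, ‖f w‖ ^ 2 * α w :=
        setIntegral_mono_on (hsq.mul_const m) (hint.mono_set hball) measurableSet_ball
          fun w hw => mul_le_mul_of_nonneg_left (hmα w hw) (sq_nonneg _)
    _ ≤ ∫ w in U, ‖f w‖ ^ 2 * α w := by
        refine setIntegral_mono_set hint ?_ hball.eventuallyLE
        filter_upwards [ae_restrict_mem hU] with w hw
        exact mul_nonneg (sq_nonneg _) (hα w hw)

theorem exists_ball_norm_sq_le_mul_integral {U : Set ℂ} (hU : IsOpen U) {α : ℂ → ℝ}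
    (hα : ContinuousOn α U) (hαpos : ∀ z ∈ U, 0 < α z) {z₀ : ℂ} (hz₀ : z₀ ∈ U) :
    ∃ r > 0, ∃ C, ∀ f : ℂ → ℂ, DifferentiableOn ℂ f U →
      IntegrableOn (fun w => ‖f w‖ ^ 2 * α w) U →
      ∀ z ∈ ball z₀ r, ‖f z‖ ^ 2 ≤ C * ∫ w in U, ‖f w‖ ^ 2 * α w := by
  obtain ⟨ρ, hρ, hρU⟩ := nhds_basis_closedBall.mem_iff.mp (hU.mem_nhds hz₀)
  obtain ⟨w₀, hw₀, hmin⟩ := (isCompact_closedBall z₀ ρ).exists_isMinOn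
    (nonempty_closedBall.mpr hρ.le) (hα.mono hρU)
  have hm : 0 < α w₀ := hαpos w₀ (hρU hw₀)
  refine ⟨ρ / 2, by positivity, (π * (ρ / 2) ^ 2 * α w₀)⁻¹, fun f hf hint z hz => ?_⟩
  have hzρ : closedBall z (ρ / 2) ⊆ closedBall z₀ ρ :=
    closedBall_subset_closedBall' (by linarith [mem_ball.mp hz])
  rw [le_inv_mul_iff₀ (by positivity)]
  calc π * (ρ / 2) ^ 2 * α w₀ * ‖f z‖ ^ 2 = ‖f z‖ ^ 2 * (π * (ρ / 2) ^ 2) * α w₀ := by ring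
    _ ≤ ∫ w in U, ‖f w‖ ^ 2 * α w :=
      (hf.diffContOnCl_ball (hzρ.trans hρU)).norm_sq_mul_le_setIntegral_mul (by positivity)
        (ball_subset_closedBall.trans (hzρ.trans hρU)) hm.le
        (fun w hw => hmin (hzρ (ball_subset_closedBall hw))) (fun w hw => (hαpos w hw).le)
        hU.measurableSet hint

theorem exists_tendstoLocallyUniformlyOn_of_forall_uniformCauchySeqOn {ι α β : Type*}
    [Nonempty ι] [SemilatticeSup ι] [TopologicalSpace α] [UniformSpace β] [CompleteSpace β]
    [Nonempty β] {F : ι → α → β} {s : Set α}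
    (h : ∀ x ∈ s, ∃ t ∈ 𝓝[s] x, UniformCauchySeqOn F atTop t) :
    ∃ f, TendstoLocallyUniformlyOn F f atTop s := by
  refine ⟨fun x => limUnder atTop fun n => F n x,
    tendstoLocallyUniformlyOn_of_forall_exists_nhds fun x hx => ?_⟩
  obtain ⟨t, ht, hF⟩ := h x hx
  exact ⟨t, ht, hF.tendstoUniformlyOn_of_tendsto fun y hy => (hF.cauchySeq hy).tendsto_limUnder⟩

theorem exists_tendstoLocallyUniformlyOn_of_tendsto_integral_norm_sub_sq_mul {U : Set ℂ}
    (hU : IsOpen U) {α : ℂ → ℝ} (hα : ContinuousOn α U) (hαpos : ∀ z ∈ U, 0 < α z)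
    {Fn : ℕ → ℂ → ℂ} (hFn : ∀ n, DifferentiableOn ℂ (Fn n) U)
    (hint : ∀ n m, IntegrableOn (fun w => ‖Fn n w - Fn m w‖ ^ 2 * α w) U)
    (hcauchy : Tendsto (fun p : ℕ × ℕ => ∫ w in U, ‖Fn p.1 w - Fn p.2 w‖ ^ 2 * α w)
      atTop (𝓝 0)) :
    ∃ G, TendstoLocallyUniformlyOn Fn G atTop U := by
  refine exists_tendstoLocallyUniformlyOn_of_forall_uniformCauchySeqOn fun z₀ hz₀ => ?_
  obtain ⟨r, hr, C, hC⟩ := exists_ball_norm_sq_le_mul_integral hU hα hαpos hz₀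
  refine ⟨ball z₀ r, mem_nhdsWithin_of_mem_nhds (ball_mem_nhds z₀ hr), ?_⟩
  rw [Metric.uniformCauchySeqOn_iff]
  intro ε hε
  have hsmall : ∀ᶠ p : ℕ × ℕ in atTop,
      C * ∫ w in U, ‖Fn p.1 w - Fn p.2 w‖ ^ 2 * α w < ε ^ 2 :=
    (hcauchy.const_mul C).eventually (gt_mem_nhds (by simpa using pow_pos hε 2))
  obtain ⟨N, hN⟩ := eventually_atTop_prod_self'.mp hsmall
  refine ⟨N, fun n hn m hm z hz => ?_⟩
  have hsq := (hC _ ((hFn n).sub (hFn m)) (hint n m) z hz).trans_lt (hN n hn m hm)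
  rw [dist_eq_norm]
  exact lt_of_pow_lt_pow_left₀ 2 hε.le hsq

theorem ae_eq_zero_of_tendsto_integral_of_tendsto_ae {X : Type*} [MeasurableSpace X]
    {μ : Measure X} {φ : ℕ → X → ℝ} {ψ : X → ℝ} (hφ : ∀ n, Integrable (φ n) μ)
    (hφ_nonneg : ∀ n, 0 ≤ᵐ[μ] φ n) (hint : Tendsto (fun n => ∫ x, φ n x ∂μ) atTop (𝓝 0))
    (hlim : ∀ᵐ x ∂μ, Tendsto (fun n => φ n x) atTop (𝓝 (ψ x))) : ψ =ᵐ[μ] 0 := by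
  have hlim' : ∀ᵐ x ∂μ, Tendsto (fun n => ENNReal.ofReal (φ n x)) atTop
      (𝓝 (ENNReal.ofReal (ψ x))) :=
    hlim.mono fun x hx => ENNReal.tendsto_ofReal hx
  have hmeas : ∀ n, AEMeasurable (fun x => ENNReal.ofReal (φ n x)) μ :=
    fun n => (hφ n).aemeasurable.ennreal_ofReal
  have hψ_nonneg : 0 ≤ᵐ[μ] ψ := by
    filter_upwards [hlim, ae_all_iff.mpr hφ_nonneg] with x hx hx0
    exact ge_of_tendsto' hx hx0
  have hlint : ∫⁻ x, ENNReal.ofReal (ψ x) ∂μ = 0 := by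
    refine le_antisymm ?_ (by positivity)
    calc ∫⁻ x, ENNReal.ofReal (ψ x) ∂μ
        = ∫⁻ x, liminf (fun n => ENNReal.ofReal (φ n x)) atTop ∂μ :=
          lintegral_congr_ae (hlim'.mono fun x hx => hx.liminf_eq.symm)
      _ ≤ liminf (fun n => ∫⁻ x, ENNReal.ofReal (φ n x) ∂μ) atTop :=
          lintegral_liminf_le' hmeas
      _ = 0 := by
        refine Tendsto.liminf_eq ?_
        simpa only [← ofReal_integral_eq_lintegral_ofReal (hφ _) (hφ_nonneg _),
          ENNReal.ofReal_zero] using ENNReal.tendsto_ofReal hint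
  have hψ_zero : ∀ᵐ x ∂μ, ENNReal.ofReal (ψ x) = 0 :=
    (lintegral_eq_zero_iff' (aemeasurable_of_tendsto_metrizable_ae' hmeas hlim')).mp hlint
  filter_upwards [hψ_zero, hψ_nonneg] with x hx hx0
  exact le_antisymm (ENNReal.ofReal_eq_zero.mp hx) hx0

section WeightedSquareDistance

variable {X E : Type*} [MeasurableSpace X] [SeminormedAddCommGroup E] {μ : Measure X}
  {f g h : X → E} {α : X → ℝ}

theorem norm_sub_sq_mul_le (a b c : E) {t : ℝ} (ht : 0 ≤ t) :
    ‖a - b‖ ^ 2 * t ≤ 2 * (‖a - c‖ ^ 2 * t) + 2 * (‖b - c‖ ^ 2 * t) := by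
  have htri : ‖a - b‖ ≤ ‖a - c‖ + ‖b - c‖ := by
    simpa only [norm_sub_rev c b] using norm_sub_le_norm_sub_add_norm_sub a c b
  calc ‖a - b‖ ^ 2 * t ≤ (‖a - c‖ + ‖b - c‖) ^ 2 * t := by gcongr
    _ ≤ 2 * (‖a - c‖ ^ 2 + ‖b - c‖ ^ 2) * t := by gcongr; exact add_sq_le
    _ = 2 * (‖a - c‖ ^ 2 * t) + 2 * (‖b - c‖ ^ 2 * t) := by ring

theorem integrable_norm_sub_sq_mul (hα : 0 ≤ᵐ[μ] α)
    (hf : Integrable (fun x => ‖f x - h x‖ ^ 2 * α x) μ)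
    (hg : Integrable (fun x => ‖g x - h x‖ ^ 2 * α x) μ)
    (hfg : AEStronglyMeasurable (fun x => ‖f x - g x‖ ^ 2 * α x) μ) :
    Integrable (fun x => ‖f x - g x‖ ^ 2 * α x) μ := by
  refine ((hf.const_mul 2).add (hg.const_mul 2)).mono' hfg ?_
  filter_upwards [hα] with x hx
  rw [Real.norm_of_nonneg (mul_nonneg (sq_nonneg _) hx)]
  exact norm_sub_sq_mul_le _ _ _ hx

theorem integral_norm_sub_sq_mul_le (hα : 0 ≤ᵐ[μ] α)
    (hf : Integrable (fun x => ‖f x - h x‖ ^ 2 * α x) μ)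
    (hg : Integrable (fun x => ‖g x - h x‖ ^ 2 * α x) μ)
    (hfg : Integrable (fun x => ‖f x - g x‖ ^ 2 * α x) μ) :
    ∫ x, ‖f x - g x‖ ^ 2 * α x ∂μ ≤
      2 * ∫ x, ‖f x - h x‖ ^ 2 * α x ∂μ + 2 * ∫ x, ‖g x - h x‖ ^ 2 * α x ∂μ := by
  rw [← integral_const_mul, ← integral_const_mul,
    ← integral_add (hf.const_mul 2) (hg.const_mul 2)]
  exact integral_mono_ae hfg ((hf.const_mul 2).add (hg.const_mul 2))
    (hα.mono fun x hx => norm_sub_sq_mul_le _ _ _ hx)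

theorem tendsto_integral_norm_sub_sq_mul_of_tendsto {Fn : ℕ → X → E} {F : X → E}
    (hα : 0 ≤ᵐ[μ] α) (hFn : ∀ n, Integrable (fun x => ‖Fn n x - F x‖ ^ 2 * α x) μ)
    (hint : ∀ n m, Integrable (fun x => ‖Fn n x - Fn m x‖ ^ 2 * α x) μ)
    (hconv : Tendsto (fun n => ∫ x, ‖Fn n x - F x‖ ^ 2 * α x ∂μ) atTop (𝓝 0)) :
    Tendsto (fun p : ℕ × ℕ => ∫ x, ‖Fn p.1 x - Fn p.2 x‖ ^ 2 * α x ∂μ) atTop (𝓝 0) := by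
  have hbound := ((hconv.comp tendsto_fst).const_mul 2).add ((hconv.comp tendsto_snd).const_mul 2)
  rw [prod_atTop_atTop_eq, mul_zero, add_zero] at hbound
  exact squeeze_zero
    (fun p => integral_nonneg_of_ae (hα.mono fun x hx => mul_nonneg (sq_nonneg _) hx))
    (fun p => integral_norm_sub_sq_mul_le hα (hFn p.1) (hFn p.2) (hint p.1 p.2)) hbound

end WeightedSquareDistance

theorem holomorphic_L2_closed_general
    (U : Set ℂ) (hU : IsOpen U)
    (α : ℂ → ℝ) (hα : ContinuousOn α U) (hαpos : ∀ z ∈ U, 0 < α z)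
    (Fn : ℕ → ℂ → ℂ) (F : ℂ → ℂ)
    (hFn : ∀ n, DifferentiableOn ℂ (Fn n) U)
    (hdiffL2 : ∀ n, IntegrableOn (fun w => ‖Fn n w - F w‖ ^ 2 * α w) U)
    (hconv : Filter.Tendsto
      (fun n => ∫ w in U, ‖Fn n w - F w‖ ^ 2 * α w)
      Filter.atTop (nhds 0)) :
    ∃ G : ℂ → ℂ, DifferentiableOn ℂ G U ∧
      ∀ᵐ w ∂(volume.restrict U), F w = G w := by
  have hαU : ∀ᵐ w ∂(volume.restrict U), 0 ≤ α w :=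
    (ae_restrict_mem hU.measurableSet).mono fun w hw => (hαpos w hw).le
  have hint : ∀ n m, IntegrableOn (fun w => ‖Fn n w - Fn m w‖ ^ 2 * α w) U := fun n m =>
    integrable_norm_sub_sq_mul hαU (hdiffL2 n) (hdiffL2 m)
      ((((hFn n).continuousOn.sub (hFn m).continuousOn).norm.pow 2).mul hα
        |>.aestronglyMeasurable hU.measurableSet)
  obtain ⟨G, hG⟩ := exists_tendstoLocallyUniformlyOn_of_tendsto_integral_norm_sub_sq_mul
    hU hα hαpos hFn hint (tendsto_integral_norm_sub_sq_mul_of_tendsto hαU hdiffL2 hint hconv)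
  refine ⟨G, hG.differentiableOn (Eventually.of_forall hFn) hU, ?_⟩
  have hzero : (fun w => ‖G w - F w‖ ^ 2 * α w) =ᵐ[volume.restrict U] 0 :=
    ae_eq_zero_of_tendsto_integral_of_tendsto_ae hdiffL2
      (fun n => hαU.mono fun w hw => mul_nonneg (sq_nonneg _) hw) hconv
      ((ae_restrict_mem hU.measurableSet).mono fun w hw =>
        (((hG.tendsto_at hw).sub_const (F w)).norm.pow 2).mul_const (α w))
  filter_upwards [hzero, ae_restrict_mem hU.measurableSet] with w hw hwU
  have hnorm : ‖G w - F w‖ ^ 2 = 0 := (mul_eq_zero.mp hw).resolve_right (hαpos w hwU).ne'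
  exact (sub_eq_zero.mp (norm_eq_zero.mp (pow_eq_zero_iff two_ne_zero |>.mp hnorm))).symm

theorem holomorphic_L2_closed
    (U : Set ℂ) (hU : IsOpen U)
    (α : ℂ → ℝ) (hα : ContinuousOn α U) (hαpos : ∀ z ∈ U, 0 < α z)
    (Fn : ℕ → ℂ → ℂ) (F : ℂ → ℂ)
    (hFn : ∀ n, DifferentiableOn ℂ (Fn n) U)
    (hFnL2 : ∀ n, IntegrableOn (fun w => ‖Fn n w‖ ^ 2 * α w) U)
    (hFL2 : IntegrableOn (fun w => ‖F w‖ ^ 2 * α w) U)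
    (hdiffL2 : ∀ n, IntegrableOn (fun w => ‖Fn n w - F w‖ ^ 2 * α w) U)
    (hconv : Filter.Tendsto
      (fun n => ∫ w in U, ‖Fn n w - F w‖ ^ 2 * α w)
      Filter.atTop (nhds 0)) :
    ∃ G : ℂ → ℂ, DifferentiableOn ℂ G U ∧
      ∀ᵐ w ∂(volume.restrict U), F w = G w :=
  holomorphic_L2_closed_general U hU α hα hαpos Fn F hFn hdiffL2 hconv
end

section
/- For every entire function F : ℂ → ℂ with ∫_ℂ |F(w)|² (πt)⁻¹ e^{−|w|²/t} dA(w) < ∞ and every z ∈ ℂ, the reproducing identity F(z) = ∫_ℂ e^{z·conj(w)/t} F(w) (πt)⁻¹ e^{−|w|²/t} dA(w) holds. -/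
/-!
Completing the square, `z w̄ - |w|² = |z|² - z̄ w - |w - z|²`, rewrites the integral as
`(πt)⁻¹ e^{|z|²/t}` times the Gaussian average centred at `z` of the entire function
`H w = e^{-z̄ w / t} F w`. In polar coordinates around `z` that average is a superposition of
circle averages of `H`, each equal to `H z = e^{-|z|²/t} F z` by the mean value property.
The integral converges because `|F| e^{Re(z w̄)/t} ≤ (|F|² + e^{2 Re(z w̄)/t}) / 2`, and
`e^{2 Re(z w̄)/t} e^{-|w|²/t}` is again a Gaussian, centred at `z`.
-/

open MeasureTheory Real Set Complex ComplexConjugate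

variable {E : Type*} [NormedAddCommGroup E]

theorem integrableOn_comp_polarCoord_symm [NormedSpace ℝ E] {f : ℝ × ℝ → E}
    (hf : Integrable f) :
    IntegrableOn (fun p => p.1 • f (polarCoord.symm p)) polarCoord.target := by
  have h := (integrableOn_image_iff_integrableOn_abs_det_fderiv_smul volume
    polarCoord.open_target.measurableSet
    (fun p _ => (hasFDerivAt_polarCoord_symm p).hasFDerivWithinAt) polarCoord.symm.injOn f).1
    (polarCoord.symm_image_target_eq_source ▸ hf.integrableOn)
  refine h.congr_fun (fun p (hp : 0 < p.1 ∧ _) => ?_) polarCoord.open_target.measurableSet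
  dsimp only
  rw [det_fderivPolarCoordSymm, abs_of_pos hp.1]

theorem Complex.integrableOn_comp_polarCoord_symm [NormedSpace ℝ E] {f : ℂ → E}
    (hf : Integrable f) :
    IntegrableOn (fun p => p.1 • f (Complex.polarCoord.symm p)) polarCoord.target :=
  _root_.integrableOn_comp_polarCoord_symm <|
    (volume_preserving_equiv_real_prod.symm.integrable_comp_emb
      measurableEquivRealProd.symm.measurableEmbedding).2 hf

theorem Complex.polarCoord_symm_eq_circleMap (p : ℝ × ℝ) :
    Complex.polarCoord.symm p = circleMap 0 p.1 p.2 := by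
  simp [circleMap, exp_mul_I]

theorem integral_eq_integral_Ioi_smul_integral_circleMap [NormedSpace ℝ E] [CompleteSpace E]
    {f : ℂ → E} (hf : Integrable f) :
    ∫ u, f u = ∫ r in Ioi 0, r • ∫ θ in Ioo (-π) π, f (circleMap 0 r θ) := by
  have hf' := Complex.integrableOn_comp_polarCoord_symm hf
  simp_rw [Complex.polarCoord_symm_eq_circleMap] at hf'
  rw [← Complex.integral_comp_polarCoord_symm]
  simp_rw [Complex.polarCoord_symm_eq_circleMap, ← integral_smul]
  rw [polarCoord_target, Measure.volume_eq_prod] at hf' ⊢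
  exact setIntegral_prod _ hf'

section MeanValue

variable [NormedSpace ℂ E] [CompleteSpace E] {H : ℂ → E}

theorem integral_Ioo_circleMap_of_differentiable (hH : Differentiable ℂ H) (c : ℂ) (R : ℝ) :
    ∫ θ in Ioo (-π) π, H (circleMap c R θ) = (2 * π) • H c := by
  rw [← hH.diffContOnCl.circleAverage (c := c) (R := R), circleAverage_eq_integral_add (-π),
    intervalIntegral.integral_comp_add_right (fun θ => H (circleMap c R θ)), zero_add,
    smul_inv_smul₀ (by positivity), ← integral_Ioc_eq_integral_Ioo,
    intervalIntegral.integral_of_le (by linarith [pi_pos]), show 2 * π + -π = π by ring]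

theorem integral_radial_smul_of_differentiable (hH : Differentiable ℂ H) {g : ℝ → ℝ}
    (hg : Integrable fun u : ℂ => g ‖u‖) (hgH : Integrable fun u => g ‖u‖ • H u) :
    ∫ u, g ‖u‖ • H u = (∫ u : ℂ, g ‖u‖) • H 0 := by
  rw [integral_eq_integral_Ioi_smul_integral_circleMap hgH,
    integral_eq_integral_Ioi_smul_integral_circleMap hg, ← integral_smul_const]
  refine setIntegral_congr_fun measurableSet_Ioi fun r (hr : 0 < r) => ?_
  simp_rw [norm_circleMap_zero, abs_of_pos hr]
  rw [integral_smul, integral_Ioo_circleMap_of_differentiable hH, setIntegral_const,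
    volume_real_Ioo_of_le (by linarith [pi_pos]), smul_smul, smul_smul, smul_eq_mul, smul_eq_mul]
  congr 1
  ring

end MeanValue

section Gaussian

variable {t : ℝ}

theorem integral_rexp_neg_sq_norm_div (ht : 0 < t) : ∫ u : ℂ, rexp (-‖u‖ ^ 2 / t) = π * t := by
  have h := GaussianFourier.integral_rexp_neg_mul_sq_norm (V := ℂ) (inv_pos.2 ht)
  simp only [Complex.finrank_real_complex, neg_mul, div_inv_eq_mul] at h
  simpa [div_eq_inv_mul, mul_comm] using h

theorem integrable_rexp_neg_sq_norm_div (ht : 0 < t) :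
    Integrable fun u : ℂ => rexp (-‖u‖ ^ 2 / t) :=
  Integrable.of_integral_ne_zero <| by rw [integral_rexp_neg_sq_norm_div ht]; positivity

theorem integral_gaussian_smul_of_differentiable [NormedSpace ℂ E] [CompleteSpace E] {H : ℂ → E}
    (hH : Differentiable ℂ H) (ht : 0 < t) (z : ℂ)
    (hint : Integrable fun w => rexp (-‖w - z‖ ^ 2 / t) • H w) :
    ∫ w, rexp (-‖w - z‖ ^ 2 / t) • H w = (π * t) • H z := by
  rw [← integral_add_left_eq_self _ z]
  simp only [add_sub_cancel_left]
  rw [integral_radial_smul_of_differentiable (g := fun r => rexp (-r ^ 2 / t))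
    (H := fun u => H (z + u)) (by fun_prop) (integrable_rexp_neg_sq_norm_div ht)
    (by simpa using hint.comp_add_left z), integral_rexp_neg_sq_norm_div ht]
  simp

end Gaussian

theorem MeasureTheory.Integrable.mul_of_sq_mul {α : Type*} [MeasurableSpace α] {μ : Measure α}
    {f k g : α → ℝ} (hf : Integrable (fun x => f x ^ 2 * g x) μ)
    (hk : Integrable (fun x => k x ^ 2 * g x) μ) (hg : 0 ≤ g)
    (hm : AEStronglyMeasurable (fun x => f x * k x * g x) μ) :
    Integrable (fun x => f x * k x * g x) μ := by
  refine ((hf.add hk).div_const 2).mono' hm (ae_of_all _ fun x => ?_)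
  rw [Pi.add_apply, Real.norm_eq_abs, abs_mul, abs_mul, abs_of_nonneg (hg x), ← sq_abs (f x),
    ← sq_abs (k x)]
  nlinarith [mul_le_mul_of_nonneg_right (two_mul_le_add_sq |f x| |k x|) (hg x)]

theorem Complex.cexp_mul_conj_div_mul_rexp (t : ℝ) (z w : ℂ) :
    cexp (z * conj w / t) * rexp (-‖w‖ ^ 2 / t) =
      rexp (‖z‖ ^ 2 / t) * rexp (-‖w - z‖ ^ 2 / t) * cexp (-(conj z * w) / t) := by
  push_cast
  simp only [← Complex.exp_add]
  congr 1
  rw [← mul_conj', ← mul_conj', ← mul_conj', map_sub]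
  ring

theorem Real.exp_re_mul_conj_div_sq_mul (t : ℝ) (z w : ℂ) :
    rexp ((z * conj w / t).re) ^ 2 * rexp (-‖w‖ ^ 2 / t) =
      rexp (‖z‖ ^ 2 / t) * rexp (-‖w - z‖ ^ 2 / t) := by
  rw [sq, ← exp_add, ← exp_add, ← exp_add]
  congr 1
  simp only [div_ofReal_re, Complex.sq_norm, normSq_apply, mul_re, conj_re, conj_im, sub_re,
    sub_im]
  ring

theorem integrable_cexp_mul_conj_mul_gaussian {t : ℝ} (ht : 0 < t) {F : ℂ → ℂ}
    (hF : AEStronglyMeasurable F)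
    (hL2 : Integrable fun w => ‖F w‖ ^ 2 * ((π * t)⁻¹ * rexp (-‖w‖ ^ 2 / t))) (z : ℂ) :
    Integrable fun w =>
      cexp (z * conj w / t) * F w * (((π * t)⁻¹ * rexp (-‖w‖ ^ 2 / t) : ℝ) : ℂ) := by
  have hk : Integrable fun w =>
      rexp ((z * conj w / t).re) ^ 2 * ((π * t)⁻¹ * rexp (-‖w‖ ^ 2 / t)) := by
    simp_rw [mul_left_comm _ (π * t)⁻¹, Real.exp_re_mul_conj_div_sq_mul]
    exact (((integrable_rexp_neg_sq_norm_div ht).comp_sub_right z).const_mul _).const_mul _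
  refine (integrable_norm_iff (by fun_prop)).1 ?_
  have hnorm : ∀ w,
      ‖cexp (z * conj w / t) * F w * (((π * t)⁻¹ * rexp (-‖w‖ ^ 2 / t) : ℝ) : ℂ)‖ =
        ‖F w‖ * rexp ((z * conj w / t).re) * ((π * t)⁻¹ * rexp (-‖w‖ ^ 2 / t)) := fun w => by
    rw [norm_mul, norm_mul, norm_exp, norm_real, Real.norm_of_nonneg (by positivity),
      mul_comm ‖F w‖]
  simp_rw [hnorm]
  exact hL2.mul_of_sq_mul hk (fun w => by positivity) (by fun_prop)

theorem segal_bargmann_reproducing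
    (t : ℝ) (ht : 0 < t) (F : ℂ → ℂ) (hF : Differentiable ℂ F)
    (hL2 : Integrable (fun w => ‖F w‖ ^ 2 *
      ((Real.pi * t)⁻¹ * Real.exp (-(‖w‖) ^ 2 / t)))) :
    ∀ z : ℂ, F z = ∫ w : ℂ,
      Complex.exp (z * (starRingEnd ℂ) w / (t : ℂ)) * F w *
        ((((Real.pi * t)⁻¹ * Real.exp (-(‖w‖) ^ 2 / t)) : ℝ) : ℂ) := by
  intro z
  set H : ℂ → ℂ := fun w => cexp (-(conj z * w) / t) * F w
  set c : ℝ := (π * t)⁻¹ * rexp (‖z‖ ^ 2 / t)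
  have hkernel : ∀ w,
      cexp (z * conj w / t) * F w * (((π * t)⁻¹ * rexp (-‖w‖ ^ 2 / t) : ℝ) : ℂ) =
        c • rexp (-‖w - z‖ ^ 2 / t) • H w := fun w => by
    have h := Complex.cexp_mul_conj_div_mul_rexp t z w
    simp only [c, H, real_smul]
    push_cast at h ⊢
    linear_combination ((π : ℂ)⁻¹ * (t : ℂ)⁻¹ * F w) * h
  have hint : Integrable fun w => rexp (-‖w - z‖ ^ 2 / t) • H w := by
    refine (integrable_fun_smul_iff (show c ≠ 0 by positivity) _).1 ?_
    simpa only [hkernel] using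
      integrable_cexp_mul_conj_mul_gaussian ht hF.continuous.aestronglyMeasurable hL2 z
  have hHz : H z = rexp (-‖z‖ ^ 2 / t) • F z := by
    simp only [H, conj_mul', real_smul]
    push_cast
    ring
  have hc : c * (π * t) * rexp (-‖z‖ ^ 2 / t) = 1 := by
    rw [mul_comm c, ← mul_assoc, mul_assoc, mul_inv_cancel₀ (by positivity), one_mul,
      ← Real.exp_add, neg_div, add_neg_cancel, Real.exp_zero]
  simp_rw [hkernel]
  rw [integral_smul, integral_gaussian_smul_of_differentiable (by fun_prop) ht z hint, hHz,
    smul_smul, smul_smul, hc, one_smul]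
end

section
/- If A and B are n×n complex matrices that both commute with their commutator [A,B], then exp(A)·exp(B) = exp(A + B + (1/2)[A,B]). -/
/-!
Write `C = [A, B]`. Since `A` commutes with `C`, both `t ↦ exp (t A) B` and `t ↦ (B + t C) exp (t A)`
solve `F' = A F`, so `exp (t A) B = (B + t C) exp (t A)`. Hence `W t = exp (t A) exp (t B)` solves
`W' = (A + B + t C) W`, and as `C` commutes with `A + B`, the product `exp (-(t²/2) C) W t` solves
`V' = (A + B) V`, so it equals `exp (t (A + B))`. Put `t = 1`.
-/

open NormedSpace

variable {𝕂 𝔸 : Type*} [RCLike 𝕂] [NormedRing 𝔸] [NormedAlgebra 𝕂 𝔸] [CompleteSpace 𝔸]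

theorem eq_exp_smul_mul_of_hasDerivAt {X : 𝔸} {F : 𝕂 → 𝔸}
    (hF : ∀ s, HasDerivAt F (X * F s) s) (s : 𝕂) : F s = exp (s • X) * F 0 := by
  let _ : NormedAlgebra ℚ 𝔸 := NormedAlgebra.restrictScalars ℚ 𝕂 𝔸
  have hderiv : ∀ u : 𝕂, HasDerivAt (fun u => exp (u • -X) * F u) 0 u := fun u => by
    refine ((hasDerivAt_exp_smul_const' (-X) u).fun_mul (hF u)).congr_deriv ?_
    rw [← mul_assoc, ← ((Commute.refl X).neg_right.smul_right u).exp_right.eq]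
    noncomm_ring
  have hconst : exp (s • -X) * F s = F 0 := by
    simpa using is_const_of_deriv_eq_zero (fun u => (hderiv u).differentiableAt)
      (fun u => (hderiv u).deriv) s 0
  rw [← hconst, ← mul_assoc, ← exp_add_of_commute
    (((Commute.refl X).neg_right.smul_left s).smul_right s), smul_neg, add_neg_cancel, exp_zero,
    one_mul]

theorem exp_smul_mul_of_commute_commutator {X Y : 𝔸} (h : Commute X (X * Y - Y * X)) (t : 𝕂) :
    exp (t • X) * Y = (Y + t • (X * Y - Y * X)) * exp (t • X) := by
  set C := X * Y - Y * X with hC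
  have hderiv : ∀ s : 𝕂, HasDerivAt (fun s => (Y + s • C) * exp (s • X))
      (X * ((Y + s • C) * exp (s • X))) s := fun s => by
    refine ((((hasDerivAt_id s).smul_const C).const_add Y).fun_mul
      (hasDerivAt_exp_smul_const' X s)).congr_deriv ?_
    simp only [id, one_smul, add_mul, mul_add, smul_mul_assoc, mul_smul_comm, ← mul_assoc, h.eq]
    rw [hC]
    noncomm_ring
  simpa using (eq_exp_smul_mul_of_hasDerivAt hderiv t).symm

theorem exp_mul_exp_of_commute_commutator {A B : 𝔸}
    (hA : Commute A (A * B - B * A)) (hB : Commute B (A * B - B * A)) :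
    exp A * exp B = exp (A + B + (1 / 2 : 𝕂) • (A * B - B * A)) := by
  let _ : NormedAlgebra ℚ 𝔸 := NormedAlgebra.restrictScalars ℚ 𝕂 𝔸
  set C := A * B - B * A with hC
  have hCS : Commute C (A + B) := hA.symm.add_right hB.symm
  have hW : ∀ t : 𝕂, HasDerivAt (fun t => exp (t • A) * exp (t • B))
      ((A + B + t • C) * (exp (t • A) * exp (t • B))) t := fun t => by
    refine ((hasDerivAt_exp_smul_const' A t).fun_mul
      (hasDerivAt_exp_smul_const' B t)).congr_deriv ?_
    rw [← mul_assoc (exp (t • A)), exp_smul_mul_of_commute_commutator hA, ← hC]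
    noncomm_ring
  have hV : ∀ t : 𝕂, HasDerivAt (fun t => exp ((-(t ^ 2 / 2)) • C) * (exp (t • A) * exp (t • B)))
      ((A + B) * (exp ((-(t ^ 2 / 2)) • C) * (exp (t • A) * exp (t • B)))) t := fun t => by
    have hφ : HasDerivAt (fun t : 𝕂 => -(t ^ 2 / 2)) (-t) t := by
      simpa using ((hasDerivAt_pow 2 t).div_const 2).fun_neg
    refine (((hasDerivAt_exp_smul_const' C _).scomp t hφ).fun_mul (hW t)).congr_deriv ?_
    rw [Function.comp_apply, ← mul_assoc (exp _) (A + B + t • C),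
      ((hCS.smul_left _).exp_left.add_right
        (((Commute.refl C).smul_left _).exp_left.smul_right t)).eq]
    simp only [add_mul, neg_smul, neg_mul, smul_mul_assoc, mul_assoc]
    abel
  have hV1 := eq_exp_smul_mul_of_hasDerivAt hV 1
  simp only [one_pow, one_smul, zero_pow two_ne_zero, zero_div, neg_zero, zero_smul, exp_zero,
    mul_one] at hV1
  rw [add_comm (A + B), exp_add_of_commute (hCS.smul_left _), ← hV1, ← mul_assoc,
    ← exp_add_of_commute (((Commute.refl C).smul_left _).smul_right _), ← add_smul,
    add_neg_cancel, zero_smul, exp_zero, one_mul]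

theorem baker_campbell_hausdorff_special
    (n : ℕ) (A B : Matrix (Fin n) (Fin n) ℂ)
    (h1 : A * (A * B - B * A) = (A * B - B * A) * A)
    (h2 : B * (A * B - B * A) = (A * B - B * A) * B) :
    NormedSpace.exp A * NormedSpace.exp B
      = NormedSpace.exp (A + B + (1 / 2 : ℂ) • (A * B - B * A)) := by
  -- `exp` does not depend on the norm; any algebra norm makes the matrices a Banach algebra
  let _ : NormedRing (Matrix (Fin n) (Fin n) ℂ) := Matrix.linftyOpNormedRing
  let _ : NormedAlgebra ℂ (Matrix (Fin n) (Fin n) ℂ) := Matrix.linftyOpNormedAlgebra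
  exact exp_mul_exp_of_commute_commutator h1 h2
end
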